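/- arXiv:1312.3857 — 3 statements merged into one kernel-verified Lean document; each statement's English description precedes it below -/
import Mathlib

section
/- Let C be a category of partitions with ↓⊗↓ ∉ C, and let p ∈ C ∩ P(0,n). Then n is even and every block of p has size at least two. -/
/-!
Basic combinatorics of categories of partitions (Banica–Speicher easy quantum groups).

A partition with `k` upper and `l` lower points is encoded as an equivalence
relation (a `Setoid`) on the set `Fin k ⊕ Fin l` of its points; its blocks are
the equivalence classes.
-/

namespace EasyQG

/-- A partition of `k` upper and `l` lower points into blocks. -/
abbrev Partition (k l : ℕ) : Type := Setoid (Fin k ⊕ Fin l)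

/-- The relation "lying in the same block" of a partition. -/
def inSameBlock {k l : ℕ} (p : Partition k l) :
    (Fin k ⊕ Fin l) → (Fin k ⊕ Fin l) → Prop :=
  @Setoid.r _ p

/-- The partition in `P(0,n)` associated to a word: two points lie in the same
block iff they carry the same letter. -/
def ofWord {n : ℕ} (w : Fin n → ℕ) : Partition 0 n :=
  Setoid.ker (Sum.elim Fin.elim0 w)

/-- The partition in `P(0,n)` associated to a word given as a list of letters. -/
def ofList (w : List ℕ) : Partition 0 w.length :=
  ofWord w.get

/-- The identity partition `|` in `P(1,1)`: one upper point joined to one lower point. -/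
def idPartition : Partition 1 1 := ⊤

/-- The pair partition `⊓` in `P(0,2)`: two points in one block. -/
def pairPartition : Partition 0 2 := ⊤

/-- The double singleton `↓⊗↓` in `P(0,2)`: two points in two different blocks. -/
def doubleSingleton : Partition 0 2 := ⊥

/-- The four block partition `⊓⊓` in `P(0,4)`: four points in one block (word `aaaa`). -/
def fourBlock : Partition 0 4 := ⊤

/-- The fat crossing partition in `P(4,4)`, with blocks `{1,2,3',4'}` and `{3,4,1',2'}`. -/
def fatCross : Partition 4 4 :=
  Setoid.ker (Sum.elim (fun i => decide (i.val < 2)) (fun j => decide (2 ≤ j.val)))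

/-- The pair positioner partition in `P(3,3)`, with blocks `{1,2,2',3'}` and `{3,1'}`. -/
def pairPositioner : Partition 3 3 :=
  Setoid.ker (Sum.elim (fun i => decide (i.val < 2)) (fun j => decide (1 ≤ j.val)))

/-- The `s`-mixing partition `h_s ∈ P(0,2s)`, the word `abab…ab` of length `2s`. -/
def sMixing (s : ℕ) : Partition 0 (2 * s) := ofWord (fun i => i.val % 2)

/-- The partition `π_k ∈ P(0,4k)`, the word `a₁…a_k a_k…a₁ a₁…a_k a_k…a₁`
in `k` distinct letters. -/
def piPartition (k : ℕ) : Partition 0 (4 * k) :=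
  ofWord (fun i =>
    if i.val % (2 * k) < k then i.val % (2 * k) else 2 * k - 1 - i.val % (2 * k))

/-- The disjoint sum of two set partitions. -/
def sumSetoid {α β : Type*} (ra : Setoid α) (rb : Setoid β) : Setoid (α ⊕ β) where
  r := Sum.LiftRel (@Setoid.r _ ra) (@Setoid.r _ rb)
  iseqv := by
    constructor
    · intro x
      cases x with
      | inl a => exact Sum.LiftRel.inl (ra.iseqv.refl a)
      | inr b => exact Sum.LiftRel.inr (rb.iseqv.refl b)
    · intro x y h
      cases h with
      | inl h => exact Sum.LiftRel.inl (ra.iseqv.symm h)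
      | inr h => exact Sum.LiftRel.inr (rb.iseqv.symm h)
    · intro x y z h1 h2
      cases h1 with
      | inl h1 => cases h2 with
        | inl h2 => exact Sum.LiftRel.inl (ra.iseqv.trans h1 h2)
      | inr h1 => cases h2 with
        | inr h2 => exact Sum.LiftRel.inr (rb.iseqv.trans h1 h2)

/-- Tensor product (horizontal concatenation) of partitions. -/
def tensor {k l k' l' : ℕ} (p : Partition k l) (q : Partition k' l') :
    Partition (k + k') (l + l') :=
  Setoid.comap
    (fun x => (Equiv.sumSumSumComm (Fin k) (Fin k') (Fin l) (Fin l'))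
      (Sum.map finSumFinEquiv.symm finSumFinEquiv.symm x))
    (sumSetoid p q)

/-- Composition (vertical concatenation) of partitions `p ∈ P(k,l)` and `q ∈ P(l,m)`:
blocks are joined along the `l` middle points, which are then deleted. -/
def comp {k l m : ℕ} (p : Partition k l) (q : Partition l m) : Partition k m :=
  Setoid.comap (Sum.map id Sum.inr)
    (Relation.EqvGen.setoid (fun x y : Fin k ⊕ (Fin l ⊕ Fin m) =>
      (∃ a b, inSameBlock p a b ∧ Sum.map id Sum.inl a = x ∧ Sum.map id Sum.inl b = y) ∨
      (∃ a b, inSameBlock q a b ∧ Sum.inr a = x ∧ Sum.inr b = y)))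

/-- Involution (turning a partition upside down). -/
def involution {k l : ℕ} (p : Partition k l) : Partition l k :=
  Setoid.comap Sum.swap p

/-- Rotation moving the leftmost upper point to the left end of the lower row. -/
def rotUL {k l : ℕ} (p : Partition (k + 1) l) : Partition k (l + 1) :=
  Setoid.comap
    (Sum.elim (fun i => Sum.inl i.succ)
      (fun j => Fin.cases (Sum.inl (0 : Fin (k + 1))) (fun j' => Sum.inr j') j)) p

/-- Rotation moving the leftmost lower point to the left end of the upper row. -/
def rotLU {k l : ℕ} (p : Partition k (l + 1)) : Partition (k + 1) l :=
  Setoid.comap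
    (Sum.elim (fun i => Fin.cases (Sum.inr (0 : Fin (l + 1))) (fun i' => Sum.inl i') i)
      (fun j => Sum.inr j.succ)) p

/-- Rotation moving the rightmost upper point to the right end of the lower row. -/
def rotUR {k l : ℕ} (p : Partition (k + 1) l) : Partition k (l + 1) :=
  Setoid.comap
    (Sum.elim (fun i => Sum.inl i.castSucc)
      (fun j => Fin.lastCases (Sum.inl (Fin.last k)) (fun j' => Sum.inr j') j)) p

/-- Rotation moving the rightmost lower point to the right end of the upper row. -/
def rotRU {k l : ℕ} (p : Partition k (l + 1)) : Partition (k + 1) l :=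
  Setoid.comap
    (Sum.elim (fun i => Fin.lastCases (Sum.inr (Fin.last l)) (fun i' => Sum.inl i') i)
      (fun j => Sum.inr j.castSucc)) p

/-- A category of partitions: a collection of partitions containing the identity
partition and closed under the category operations (tensor product, composition,
involution and the four rotations). -/
structure PartitionCategory where
  mem : Set (Σ k l : ℕ, Partition k l)
  id_mem : ⟨1, 1, idPartition⟩ ∈ mem
  tensor_mem : ∀ {k l k' l' : ℕ} {p : Partition k l} {q : Partition k' l'},
    ⟨k, l, p⟩ ∈ mem → ⟨k', l', q⟩ ∈ mem → ⟨k + k', l + l', tensor p q⟩ ∈ mem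
  comp_mem : ∀ {k l m : ℕ} {p : Partition k l} {q : Partition l m},
    ⟨k, l, p⟩ ∈ mem → ⟨l, m, q⟩ ∈ mem → ⟨k, m, comp p q⟩ ∈ mem
  involution_mem : ∀ {k l : ℕ} {p : Partition k l},
    ⟨k, l, p⟩ ∈ mem → ⟨l, k, involution p⟩ ∈ mem
  rotUL_mem : ∀ {k l : ℕ} {p : Partition (k + 1) l},
    ⟨k + 1, l, p⟩ ∈ mem → ⟨k, l + 1, rotUL p⟩ ∈ mem
  rotLU_mem : ∀ {k l : ℕ} {p : Partition k (l + 1)},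
    ⟨k, l + 1, p⟩ ∈ mem → ⟨k + 1, l, rotLU p⟩ ∈ mem
  rotUR_mem : ∀ {k l : ℕ} {p : Partition (k + 1) l},
    ⟨k + 1, l, p⟩ ∈ mem → ⟨k, l + 1, rotUR p⟩ ∈ mem
  rotRU_mem : ∀ {k l : ℕ} {p : Partition k (l + 1)},
    ⟨k, l + 1, p⟩ ∈ mem → ⟨k + 1, l, rotRU p⟩ ∈ mem

/-- The members of the smallest category of partitions containing `S`
(the category `⟨S⟩` generated by `S`). -/
def generated (S : Set (Σ k l : ℕ, Partition k l)) : Set (Σ k l : ℕ, Partition k l) :=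
  {x | ∀ C : PartitionCategory, S ⊆ C.mem → x ∈ C.mem}

/-- A category of partitions is hyperoctahedral if it contains the four block
partition `⊓⊓` but not the double singleton `↓⊗↓`. -/
def Hyperoctahedral (C : PartitionCategory) : Prop :=
  (⟨0, 4, fourBlock⟩ : Σ k l : ℕ, Partition k l) ∈ C.mem ∧
    (⟨0, 2, doubleSingleton⟩ : Σ k l : ℕ, Partition k l) ∉ C.mem

/-- A category of partitions is group-theoretical if it contains the pair
positioner partition. -/
def GroupTheoretical (C : PartitionCategory) : Prop :=
  (⟨3, 3, pairPositioner⟩ : Σ k l : ℕ, Partition k l) ∈ C.mem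

/-- The generating set `{π_l | 1 ≤ l ≤ k}`. -/
def piUpTo (k : ℕ) : Set (Σ k l : ℕ, Partition k l) :=
  {x | ∃ l : ℕ, 1 ≤ l ∧ l ≤ k ∧ x = ⟨0, 4 * l, piPartition l⟩}

/-- The generating set `{π_l | l ∈ ℕ, l ≥ 1}`. -/
def piAll : Set (Σ k l : ℕ, Partition k l) :=
  {x | ∃ l : ℕ, 1 ≤ l ∧ x = ⟨0, 4 * l, piPartition l⟩}

end EasyQG
namespace EasyQG

/-- Merging the blocks of the points `x` and `y` of a partition. -/
def merge {k l : ℕ} (p : Partition k l) (x y : Fin k ⊕ Fin l) : Partition k l :=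
  Relation.EqvGen.setoid (fun u v => inSameBlock p u v ∨ (u = x ∧ v = y) ∨ (u = y ∧ v = x))

/-- The word `a_{i(1)}^{k(1)} … a_{i(m)}^{k(m)}` determined by a list of
letters with exponents. -/
def expand (blocks : List (ℕ × ℕ)) : List ℕ :=
  (blocks.map fun be => List.replicate be.2 be.1).flatten

/-- The run decomposition of a word: the list of its (letter, exponent) blocks. -/
def runs : List ℕ → List (ℕ × ℕ)
  | [] => []
  | a :: rest =>
    match runs rest with
    | [] => [(a, 1)]
    | (b, e) :: rs => if a = b then (b, e + 1) :: rs else (a, 1) :: (b, e) :: rs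

/-- The single-double leg form associated to a word: every odd exponent is
replaced by `1` and every even exponent by `2`. -/
def sdForm (w : List ℕ) : List ℕ :=
  expand ((runs w).map fun be => (be.1, if Odd be.2 then 1 else 2))

/-- A word is in single-double leg form if all its exponents are `1` or `2`. -/
def IsSingleDoubleLegForm (w : List ℕ) : Prop :=
  ∃ blocks : List (ℕ × ℕ), List.Chain' (fun x y => x.1 ≠ y.1) blocks ∧
    (∀ b ∈ blocks, b.2 = 1 ∨ b.2 = 2) ∧ w = expand blocks

/-- The vertical reflection of a partition: the left-to-right order of the
points is reversed in both rows, keeping the block structure. -/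
def verticalReflect {k l : ℕ} (p : Partition k l) : Partition k l :=
  Setoid.comap (Sum.map Fin.rev Fin.rev) p

/-- `leg [a₁,…,a_k] [X₁,…,X_{k-1}] = a₁ X₁ a₂ X₂ … a_{k-1} X_{k-1} a_k`:
a list of letters interleaved with filler words. -/
def leg : List ℕ → List (List ℕ) → List ℕ
  | [], _ => []
  | [a], _ => [a]
  | a :: rest, Xs => a :: (Xs.headD [] ++ leg rest Xs.tail)

/-- A word contains a W of depth `k` if it can be written as
`Y₁ S_α X_k^α S_β Y₂ S_γ X_k^γ S_δ Y₃`, where `S_α = a₁X₁^α a₂X₂^α…a_k`,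
`S_β = a_k X_{k-1}^β…X₁^β a₁`, `S_γ = a₁X₁^γ…a_k`, `S_δ = a_k X_{k-1}^δ…X₁^δ a₁`
for `k` distinct letters `a₁,…,a_k`, each of which occurs an odd number of
times in each of `S_α`, `S_β`, `S_γ`, `S_δ`. -/
def ContainsW (w : List ℕ) (k : ℕ) : Prop :=
  ∃ (as : List ℕ) (Xa Xb Xc Xd : List (List ℕ)) (Xka Xkc Y1 Y2 Y3 : List ℕ),
    as.length = k ∧ as.Nodup ∧
    Xa.length = k - 1 ∧ Xb.length = k - 1 ∧ Xc.length = k - 1 ∧ Xd.length = k - 1 ∧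
    w = Y1 ++ leg as Xa ++ Xka ++ leg as.reverse Xb ++ Y2 ++
        leg as Xc ++ Xkc ++ leg as.reverse Xd ++ Y3 ∧
    ∀ a ∈ as, Odd ((leg as Xa).count a) ∧ Odd ((leg as.reverse Xb).count a) ∧
      Odd ((leg as Xc).count a) ∧ Odd ((leg as.reverse Xd).count a)

/-- `wdepth w` is the maximal `k` such that some rotated version of the
word `w` contains a W of depth `k`. -/
noncomputable def wdepth (w : List ℕ) : ℕ :=
  sSup {k | ∃ r : ℕ, ContainsW (w.rotate r) k}

end EasyQG

namespace EasyQG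


section Aux

open Relation Sum

lemma eqvGen_fixed {α : Type*} {R : α → α → Prop} {x : α}
    (h : ∀ y z, R y z → (y = x ↔ z = x)) :
    ∀ {a b}, Relation.EqvGen R a b → (a = x ↔ b = x) := by
  intro a b hab
  induction hab with
  | rel a b hr => exact h a b hr
  | refl a => exact Iff.rfl
  | symm a b _ ih => exact ih.symm
  | trans a b c _ _ ih1 ih2 => exact ih1.trans ih2

/-- Every category of partitions contains the pair partition. -/
lemma pair_mem (C : PartitionCategory) :
    (⟨0, 2, pairPartition⟩ : Σ k l : ℕ, Partition k l) ∈ C.mem := by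
  have h := C.rotUL_mem (k := 0) (l := 1) C.id_mem
  have he : rotUL (k := 0) (l := 1) idPartition = pairPartition := by
    rw [pairPartition, Setoid.eq_top_iff]
    intro x y
    exact trivial
  rwa [he] at h

/-- If a partition in `C ∩ P(1,m)` has its upper point as a singleton block,
then `↓⊗↓ ∈ C`. -/
lemma upper_singleton_contra (C : PartitionCategory)
    (hds : (⟨0, 2, doubleSingleton⟩ : Σ k l : ℕ, Partition k l) ∉ C.mem)
    {m : ℕ} (q : Partition 1 m)
    (hq : (⟨1, m, q⟩ : Σ k l : ℕ, Partition k l) ∈ C.mem)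
    (hsing : ∀ y, q.r (Sum.inl 0) y → y = Sum.inl 0) : False := by
  have hr : (⟨1, 1, comp q (involution q)⟩ : Σ k l : ℕ, Partition k l) ∈ C.mem :=
    C.comp_mem hq (C.involution_mem hq)
  set R : (Fin 1 ⊕ (Fin m ⊕ Fin 1)) → (Fin 1 ⊕ (Fin m ⊕ Fin 1)) → Prop := fun x y =>
      (∃ a b, inSameBlock q a b ∧ Sum.map id Sum.inl a = x ∧ Sum.map id Sum.inl b = y) ∨
      (∃ a b, inSameBlock (involution q) a b ∧ Sum.inr a = x ∧ Sum.inr b = y) with hR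
  have hfix : ∀ y z, R y z → (y = Sum.inl 0 ↔ z = Sum.inl 0) := by
    intro y z hyz
    rcases hyz with ⟨a, b, hab, ha, hb⟩ | ⟨a, b, hab, ha, hb⟩
    · have key : ∀ c d : Fin 1 ⊕ Fin m, q.r c d →
          Sum.map id Sum.inl c = (Sum.inl 0 : Fin 1 ⊕ (Fin m ⊕ Fin 1)) →
          Sum.map id Sum.inl d = (Sum.inl 0 : Fin 1 ⊕ (Fin m ⊕ Fin 1)) := by
        intro c d hcd hc
        cases c with
        | inl c' =>
          have hc0 : c' = 0 := Subsingleton.elim _ _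
          subst hc0
          have := hsing d hcd
          subst this
          rfl
        | inr c' => simp [Sum.map] at hc
      constructor
      · intro hy
        subst ha; subst hb
        exact key a b hab hy
      · intro hz
        subst ha; subst hb
        exact key b a (q.iseqv.symm hab) hz
    · subst ha; subst hb
      constructor <;> intro h <;> simp at h
  have hnotrel : ¬ (comp q (involution q)).r (Sum.inl 0) (Sum.inr 0) := by
    intro hrel
    have hrel' : Relation.EqvGen R (Sum.inl 0) (Sum.inr (Sum.inr 0)) := hrel
    have := (eqvGen_fixed hfix hrel').mp rfl
    simp at this
  have hrotmem := C.rotUL_mem (k := 0) (l := 1) hr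
  have heq : rotUL (k := 0) (l := 1) (comp q (involution q)) = doubleSingleton := by
    apply Setoid.ext
    intro x y
    rw [doubleSingleton]
    constructor
    · intro hxy
      cases x with
      | inl e => exact e.elim0
      | inr i =>
        cases y with
        | inl e => exact e.elim0
        | inr j =>
          fin_cases i <;> fin_cases j
          · rfl
          · exact absurd hxy hnotrel
          · exact absurd ((comp q (involution q)).iseqv.symm hxy) hnotrel
          · rfl
    · intro hxy
      cases hxy
      exact (rotUL (comp q (involution q))).iseqv.refl x
  rw [heq] at hrotmem
  exact hds hrotmem

/-- Cyclic rotation of a partition in `P(0,l+1)`. -/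
def rot {l : ℕ} (p : Partition 0 (l + 1)) : Partition 0 (l + 1) :=
  rotUR (rotLU p)

lemma rot_mem (C : PartitionCategory) {l : ℕ} {p : Partition 0 (l + 1)}
    (hp : (⟨0, l + 1, p⟩ : Σ k l : ℕ, Partition k l) ∈ C.mem) :
    (⟨0, l + 1, rot p⟩ : Σ k l : ℕ, Partition k l) ∈ C.mem :=
  C.rotUR_mem (C.rotLU_mem hp)

lemma rot_rel {l : ℕ} (p : Partition 0 (l + 1)) (a b : Fin (l + 1)) :
    (rot p).r (Sum.inr a) (Sum.inr b) ↔ p.r (Sum.inr (a + 1)) (Sum.inr (b + 1)) := by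
  have hmap : ∀ c : Fin (l + 1),
      (Sum.elim (fun i : Fin 1 => Fin.cases (Sum.inr (0 : Fin (l+1))) (fun i' => Sum.inl i') i)
        (fun j : Fin l => Sum.inr j.succ) :
        Fin 1 ⊕ Fin l → Fin 0 ⊕ Fin (l + 1))
      (Sum.elim (fun i : Fin 0 => Sum.inl i.castSucc)
        (fun j => Fin.lastCases (Sum.inl (Fin.last 0)) (fun j' : Fin l => Sum.inr j') j)
        (Sum.inr c)) = Sum.inr (c + 1) := by
    intro c
    induction c using Fin.lastCases with
    | last =>
      simp only [Sum.elim_inr, Fin.lastCases_last, Sum.elim_inl, Fin.cases_zero]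
      have hlast : (Fin.last l + 1 : Fin (l + 1)) = 0 := by
        apply Fin.ext
        rw [Fin.add_def, Fin.val_one']
        simp [Fin.last]
      rw [hlast, show (Fin.last 0 : Fin 1) = 0 from Fin.ext rfl, Fin.cases_zero]
    | cast c' =>
      simp only [Sum.elim_inr, Fin.lastCases_castSucc, Fin.coeSucc_eq_succ]
  constructor
  · intro h
    have h' := h
    rw [show (Sum.inr a : Fin 0 ⊕ Fin (l+1)) = Sum.inr a from rfl] at h'
    have := h'
    unfold rot rotUR rotLU at this
    rw [Setoid.comap_rel, Setoid.comap_rel, hmap, hmap] at this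
    exact this
  · intro h
    show (Setoid.comap _ (Setoid.comap _ p)).r _ _
    rw [Setoid.comap_rel, Setoid.comap_rel, hmap, hmap]
    exact h

/-- No partition in `C ∩ P(0,n)` has a singleton block. -/
lemma no_singleton (C : PartitionCategory)
    (hds : (⟨0, 2, doubleSingleton⟩ : Σ k l : ℕ, Partition k l) ∉ C.mem) :
    ∀ (m : ℕ) {l : ℕ} (p : Partition 0 (l + 1)),
      (⟨0, l + 1, p⟩ : Σ k l : ℕ, Partition k l) ∈ C.mem →
      ∀ i : Fin (l + 1), i.val = m →
      (∀ y, p.r (Sum.inr i) y → y = Sum.inr i) → False := by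
  intro m
  induction m with
  | zero =>
    intro l p hp i hi hsing
    have hi0 : i = 0 := Fin.ext hi
    subst hi0
    apply upper_singleton_contra C hds (rotLU p) (C.rotLU_mem hp)
    intro y hy
    have hy' : p.r (Sum.inr 0)
        ((Sum.elim (fun i : Fin 1 => Fin.cases (Sum.inr (0 : Fin (l+1)))
            (fun i' => Sum.inl i') i) (fun j : Fin l => Sum.inr j.succ)) y) := hy
    have := hsing _ hy'
    cases y with
    | inl i0 =>
      have h0 : i0 = 0 := by omega
      rw [h0]
    | inr j =>
      simp only [Sum.elim_inr] at this
      exact absurd (Sum.inr.inj this) (Fin.succ_ne_zero j)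
  | succ m ih =>
    intro l p hp i hi hsing
    have hml : m < l + 1 := by omega
    set j : Fin (l + 1) := ⟨m, hml⟩ with hj
    have hj1 : j + 1 = i := by
      apply Fin.ext
      have hjv : j.val = m := rfl
      have hil : m + 1 < l + 1 := hi ▸ i.isLt
      rw [Fin.val_add, Fin.val_one', hjv, hi,
        Nat.mod_eq_of_lt (show (1:ℕ) < l + 1 by omega), Nat.mod_eq_of_lt hil]
    apply ih (rot p) (rot_mem C hp) j rfl
    intro y hy
    cases y with
    | inl e => exact e.elim0
    | inr b =>
      rw [rot_rel] at hy
      rw [hj1] at hy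
      have := hsing _ hy
      have hb : b + 1 = i := Sum.inr.inj this
      congr 1
      rw [← hj1] at hb
      exact add_right_cancel hb

/-- Members of `C ∩ P(0,n)` have even length when `↓⊗↓ ∉ C`. -/
lemma even_of_mem (C : PartitionCategory)
    (hds : (⟨0, 2, doubleSingleton⟩ : Σ k l : ℕ, Partition k l) ∉ C.mem) :
    ∀ (n : ℕ) (p : Partition 0 n),
      (⟨0, n, p⟩ : Σ k l : ℕ, Partition k l) ∈ C.mem → Even n := by
  intro n
  induction n using Nat.strong_induction_on with
  | _ n IH =>
    match n with
    | 0 => intro p _; exact Even.zero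
    | 1 =>
      intro p hp
      exfalso
      apply no_singleton C hds 0 p hp 0 rfl
      intro y _
      cases y with
      | inl e => exact e.elim0
      | inr j =>
        congr 1
        apply Fin.ext
        omega
    | (l + 2) =>
      intro p hp
      have hq : (⟨2, l, rotLU (rotLU p)⟩ : Σ k l : ℕ, Partition k l) ∈ C.mem :=
        C.rotLU_mem (C.rotLU_mem hp)
      have hc : (⟨0, l, comp pairPartition (rotLU (rotLU p))⟩ :
          Σ k l : ℕ, Partition k l) ∈ C.mem :=
        C.comp_mem (pair_mem C) hq
      obtain ⟨c, hcc⟩ := IH l (by omega) _ hc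
      exact ⟨c + 1, by omega⟩

end Aux

theorem statement7 (C : PartitionCategory)
    (hds : (⟨0, 2, doubleSingleton⟩ : Σ k l : ℕ, Partition k l) ∉ C.mem)
    {n : ℕ} (p : Partition 0 n)
    (hp : (⟨0, n, p⟩ : Σ k l : ℕ, Partition k l) ∈ C.mem) :
    Even n ∧ ∀ x : Fin 0 ⊕ Fin n, 2 ≤ Nat.card {y // inSameBlock p x y} := by
  refine ⟨even_of_mem C hds n p hp, ?_⟩
  intro x
  by_contra hcard
  push_neg at hcard
  have hsub : Subsingleton {y // inSameBlock p x y} := by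
    by_contra hns
    rw [not_subsingleton_iff_nontrivial] at hns
    have := Finite.one_lt_card_iff_nontrivial.mpr hns
    omega
  have hsing : ∀ y, p.r x y → y = x := by
    intro y hy
    have := hsub.elim ⟨y, hy⟩ ⟨x, p.iseqv.refl x⟩
    exact Subtype.ext_iff.mp this
  cases x with
  | inl e => exact e.elim0
  | inr i =>
    match n, p, hp, i, hsing with
    | (l + 1), p, hp, i, hsing =>
      exact no_singleton C hds i.val p hp i rfl hsing

end EasyQG
end

section
/- Let C be a hyperoctahedral category of partitions and suppose C contains a partition p ∈ P(0,n) which, as a word, has the form p = a b^k a X, where X is a subword, a ≠ b are letters, and k ∈ ℕ is odd. Then the pair positioner partition belongs to C. -/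
namespace EasyQG



/-- Two-row word partition: the kernel of a pair of letter functions. -/
def kerP {k l : ℕ} (f : Fin k → ℕ) (g : Fin l → ℕ) : Partition k l :=
  Setoid.ker (Sum.elim f g)

lemma kerP_rel {k l : ℕ} {f : Fin k → ℕ} {g : Fin l → ℕ} {x y : Fin k ⊕ Fin l} :
    kerP f g x y ↔ Sum.elim f g x = Sum.elim f g y := Setoid.ker_def

lemma ofWord_eq_kerP {n : ℕ} (w : Fin n → ℕ) : ofWord w = kerP Fin.elim0 w := rfl

lemma involution_kerP {k l : ℕ} (f : Fin k → ℕ) (g : Fin l → ℕ) :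
    involution (kerP f g) = kerP g f := by
  apply Setoid.ext
  unfold involution
  rintro (x | x) (y | y) <;>
    simp [involution, Setoid.comap_rel, kerP_rel]

lemma rotUL_kerP {k l : ℕ} (f : Fin (k + 1) → ℕ) (g : Fin l → ℕ) :
    rotUL (kerP f g) = kerP (f ∘ Fin.succ) (Fin.cases (f 0) g) := by
  apply Setoid.ext
  have key : ∀ x : Fin k ⊕ Fin (l + 1),
      Sum.elim f g (Sum.elim (fun i => Sum.inl i.succ)
        (fun j => Fin.cases (Sum.inl (0 : Fin (k+1))) (fun j' => Sum.inr j') j) x)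
        = Sum.elim (f ∘ Fin.succ) (Fin.cases (f 0) g) x := by
    rintro (x | x)
    · simp
    · induction x using Fin.cases <;> simp
  intro x y
  rw [rotUL, Setoid.comap_rel, kerP_rel, kerP_rel, key, key]

lemma rotLU_kerP {k l : ℕ} (f : Fin k → ℕ) (g : Fin (l + 1) → ℕ) :
    rotLU (kerP f g) = kerP (Fin.cases (g 0) f) (g ∘ Fin.succ) := by
  apply Setoid.ext
  have key : ∀ x : Fin (k + 1) ⊕ Fin l,
      Sum.elim f g (Sum.elim
        (fun i => Fin.cases (Sum.inr (0 : Fin (l+1))) (fun i' => Sum.inl i') i)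
        (fun j => Sum.inr j.succ) x)
        = Sum.elim (Fin.cases (g 0) f) (g ∘ Fin.succ) x := by
    rintro (x | x)
    · induction x using Fin.cases <;> simp
    · simp
  intro x y
  rw [rotLU, Setoid.comap_rel, kerP_rel, kerP_rel, key, key]

lemma rotUR_kerP {k l : ℕ} (f : Fin (k + 1) → ℕ) (g : Fin l → ℕ) :
    rotUR (kerP f g) = kerP (f ∘ Fin.castSucc) (Fin.snoc g (f (Fin.last k))) := by
  apply Setoid.ext
  have key : ∀ x : Fin k ⊕ Fin (l + 1),
      Sum.elim f g (Sum.elim (fun i => Sum.inl i.castSucc)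
        (fun j => Fin.lastCases (Sum.inl (Fin.last k)) (fun j' => Sum.inr j') j) x)
        = Sum.elim (f ∘ Fin.castSucc) (Fin.snoc g (f (Fin.last k))) x := by
    rintro (x | x)
    · simp
    · induction x using Fin.lastCases <;> simp
  intro x y
  rw [rotUR, Setoid.comap_rel, kerP_rel, kerP_rel, key, key]

lemma rotRU_kerP {k l : ℕ} (f : Fin k → ℕ) (g : Fin (l + 1) → ℕ) :
    rotRU (kerP f g) = kerP (Fin.snoc f (g (Fin.last l))) (g ∘ Fin.castSucc) := by
  apply Setoid.ext
  have key : ∀ x : Fin (k + 1) ⊕ Fin l,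
      Sum.elim f g (Sum.elim
        (fun i => Fin.lastCases (Sum.inr (Fin.last l)) (fun i' => Sum.inl i') i)
        (fun j => Sum.inr j.castSucc) x)
        = Sum.elim (Fin.snoc f (g (Fin.last l))) (g ∘ Fin.castSucc) x := by
    rintro (x | x)
    · induction x using Fin.lastCases <;> simp
    · simp
  intro x y
  rw [rotRU, Setoid.comap_rel, kerP_rel, kerP_rel, key, key]

/-- Even letter tag. -/
def dL (c : ℕ) : ℕ := 2 * c
/-- Odd letter tag. -/
def dR (c : ℕ) : ℕ := 2 * c + 1

lemma tensor_kerP {k l k' l' : ℕ} (f : Fin k → ℕ) (g : Fin l → ℕ)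
    (f' : Fin k' → ℕ) (g' : Fin l' → ℕ) :
    tensor (kerP f g) (kerP f' g') =
      kerP (fun i => Sum.elim (dL ∘ f) (dR ∘ f') (finSumFinEquiv.symm i))
           (fun j => Sum.elim (dL ∘ g) (dR ∘ g') (finSumFinEquiv.symm j)) := by
  apply Setoid.ext
  intro x y
  rw [tensor, Setoid.comap_rel, kerP_rel]
  unfold sumSetoid
  obtain x | x := x <;> obtain y | y := y <;>
    [skip; skip; skip; skip] <;>
    first
    | (induction x using Fin.addCases <;> induction y using Fin.addCases <;>
        simp [Equiv.sumSumSumComm, sumSetoid, kerP_rel, dL, dR,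
          Equiv.sumAssoc, Equiv.sumCongr, Sum.liftRel_iff] <;> omega)


lemma kerP_congr {k l : ℕ} {f f' : Fin k → ℕ} {g g' : Fin l → ℕ}
    (hff : ∀ i j, f i = f j ↔ f' i = f' j)
    (hgg : ∀ i j, g i = g j ↔ g' i = g' j)
    (hfg : ∀ i j, f i = g j ↔ f' i = g' j) : kerP f g = kerP f' g' := by
  apply Setoid.ext
  rintro (x | x) (y | y)
  · simpa [kerP_rel] using hff x y
  · simpa [kerP_rel] using hfg x y
  · simpa [kerP_rel, eq_comm] using hfg y x
  · simpa [kerP_rel] using hgg x y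

section
variable {C : PartitionCategory}

lemma mem_congr0 {n m : ℕ} (h : n = m) {W : Fin n → ℕ} {V : Fin m → ℕ}
    (hWV : ∀ i j : Fin n, W i = W j ↔ V (Fin.cast h i) = V (Fin.cast h j))
    (hm : (⟨0, n, ofWord W⟩ : Σ k l : ℕ, Partition k l) ∈ C.mem) :
    (⟨0, m, ofWord V⟩ : Σ k l : ℕ, Partition k l) ∈ C.mem := by
  subst h
  have he : ofWord W = ofWord V := by
    rw [ofWord_eq_kerP, ofWord_eq_kerP]
    exact kerP_congr (fun i _ => i.elim0) (fun i j => by simpa using hWV i j)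
      (fun i _ => i.elim0)
  rwa [he] at hm

/-- The word-membership predicate. -/
def InC (C : PartitionCategory) (w : List ℕ) : Prop :=
  (⟨0, w.length, ofList w⟩ : Σ k l : ℕ, Partition k l) ∈ C.mem

lemma InC_def {w : List ℕ} :
    InC C w ↔ (⟨0, w.length, ofWord w.get⟩ : Σ k l : ℕ, Partition k l) ∈ C.mem :=
  Iff.rfl

/-- Adapter: from an abstract word partition membership to a list membership. -/
lemma InC_of_word {n : ℕ} {W : Fin n → ℕ}
    (hm : (⟨0, n, ofWord W⟩ : Σ k l : ℕ, Partition k l) ∈ C.mem)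
    (w : List ℕ) (h : n = w.length)
    (hWV : ∀ i j : Fin n, W i = W j ↔ w.get (Fin.cast h i) = w.get (Fin.cast h j)) :
    InC C w :=
  mem_congr0 h hWV hm

lemma word_of_InC {w : List ℕ} (hw : InC C w) {n : ℕ} (h : w.length = n)
    (W : Fin n → ℕ)
    (hWV : ∀ i j : Fin w.length, w.get i = w.get j ↔ W (Fin.cast h i) = W (Fin.cast h j)) :
    (⟨0, n, ofWord W⟩ : Σ k l : ℕ, Partition k l) ∈ C.mem :=
  mem_congr0 h hWV hw

/-- The pair partition as a kernel. -/
lemma pair_mem_s11 : (⟨0, 2, kerP Fin.elim0 (fun _ => 0)⟩ : Σ k l : ℕ, Partition k l) ∈ C.mem := by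
  have h := C.rotUL_mem (k := 0) (l := 1) C.id_mem
  have he : rotUL (idPartition) = kerP Fin.elim0 (fun _ => (0 : ℕ)) := by
    have h1 : idPartition = kerP (fun _ => (0:ℕ)) (fun _ => (0:ℕ)) := by
      apply Setoid.ext
      intro x y
      unfold idPartition
      simp [idPartition, kerP_rel, Setoid.top_def]
    rw [h1, rotUL_kerP]
    exact kerP_congr (fun i _ => i.elim0) (fun i j => by
      induction i using Fin.cases <;> induction j using Fin.cases <;> simp)
      (fun i _ => i.elim0)
  rwa [he] at h

/-- The upside-down pair partition (cap) as a kernel. -/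
lemma cap_mem : (⟨2, 0, kerP (fun _ => 0) Fin.elim0⟩ : Σ k l : ℕ, Partition k l) ∈ C.mem := by
  have h := C.involution_mem pair_mem_s11
  rwa [involution_kerP] at h

/-- The empty partition. -/
lemma empty_mem : (⟨0, 0, kerP Fin.elim0 Fin.elim0⟩ : Σ k l : ℕ, Partition k l) ∈ C.mem := by
  have h := C.comp_mem pair_mem_s11 cap_mem
  have he : comp (kerP (Fin.elim0 : Fin 0 → ℕ) (fun _ : Fin 2 => (0:ℕ)))
        (kerP (fun _ : Fin 2 => (0:ℕ)) (Fin.elim0 : Fin 0 → ℕ))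
      = kerP Fin.elim0 Fin.elim0 := by
    apply Setoid.ext
    rintro (x | x) (y | y) <;> exact (x : Fin 0).elim0
  rwa [he] at h

end
/-- Letter substitution: `d ↦ c`. -/
def sub (c d : ℕ) : ℕ → ℕ := fun x => if x = d then c else x

lemma sub_d (c d : ℕ) : sub c d d = c := by simp [sub]
lemma sub_c (c d : ℕ) : sub c d c = c := by unfold sub; split <;> rfl
lemma sub_other {c d x : ℕ} (h : x ≠ d) : sub c d x = x := by simp [sub, h]

/-- The identity word. -/
def idW {n : ℕ} : Fin n → ℕ := fun i => i.val

section
variable {C : PartitionCategory}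

lemma idN_mem (n : ℕ) :
    (⟨n, n, kerP (idW (n := n)) idW⟩ : Σ k l : ℕ, Partition k l) ∈ C.mem := by
  induction n with
  | zero =>
    have he : kerP (idW (n := 0)) idW = kerP Fin.elim0 Fin.elim0 := by
      apply Setoid.ext; rintro (x | x) (y | y) <;> exact (x : Fin 0).elim0
    rw [he]; exact empty_mem
  | succ n ih =>
    have h1 : (⟨1, 1, kerP (idW (n := 1)) idW⟩ : Σ k l : ℕ, Partition k l) ∈ C.mem := by
      have he : idPartition = kerP (idW (n := 1)) idW := by
        apply Setoid.ext; unfold idPartition; rintro (x | x) (y | y) <;>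
          simp [idPartition, Setoid.top_def, kerP_rel, idW, Fin.fin_one_eq_zero x,
            Fin.fin_one_eq_zero y]
      rw [← he]; exact C.id_mem
    have h := C.tensor_mem ih h1
    rw [tensor_kerP] at h
    have he : kerP
          (fun i : Fin (n + 1) => Sum.elim (dL ∘ idW) (dR ∘ idW)
            (finSumFinEquiv.symm i : Fin n ⊕ Fin 1))
          (fun j : Fin (n + 1) => Sum.elim (dL ∘ idW) (dR ∘ idW)
            (finSumFinEquiv.symm j : Fin n ⊕ Fin 1))
        = kerP (idW (n := n + 1)) idW := by
      have hv : ∀ i : Fin (n + 1),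
          Sum.elim (dL ∘ idW) (dR ∘ (idW (n := 1))) (finSumFinEquiv.symm i)
            = if (i : ℕ) < n then 2 * (i : ℕ) else 1 := by
        intro i
        induction i using Fin.addCases with
        | left i => rw [finSumFinEquiv_symm_apply_castAdd]; simp [dL, idW, i.isLt]
        | right i => rw [finSumFinEquiv_symm_apply_natAdd]; simp [dR, idW, Fin.fin_one_eq_zero i]
      refine kerP_congr (fun i j => ?_) (fun i j => ?_) (fun i j => ?_) <;>
        rw [hv, hv] <;> simp only [idW] <;>
        have := i.isLt <;> have := j.isLt <;>
        split <;> split <;> omega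
    rwa [he] at h

/-- The capping partition `id^{⊗n} ⊗ ⊔` in normal form. -/
lemma capq_mem (n : ℕ) :
    (⟨n + 2, n, kerP (fun i : Fin (n + 2) => min i.val n) (fun j : Fin n => j.val)⟩ :
      Σ k l : ℕ, Partition k l) ∈ C.mem := by
  have h := C.tensor_mem (idN_mem n) cap_mem
  rw [tensor_kerP] at h
  have he : kerP
        (fun i : Fin (n + 2) => Sum.elim (dL ∘ idW) (dR ∘ fun _ : Fin 2 => 0)
          (finSumFinEquiv.symm i : Fin n ⊕ Fin 2))
        (fun j : Fin (n + 0) => Sum.elim (dL ∘ idW) (dR ∘ Fin.elim0)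
          (finSumFinEquiv.symm j : Fin n ⊕ Fin 0))
      = kerP (fun i : Fin (n + 2) => min i.val n) (fun j : Fin (n + 0) => j.val) := by
    have hv : ∀ i : Fin (n + 2),
        Sum.elim (dL ∘ idW) (dR ∘ fun _ : Fin 2 => 0) (finSumFinEquiv.symm i)
          = if (i : ℕ) < n then 2 * (i : ℕ) else 1 := by
      intro i
      induction i using Fin.addCases with
      | left i => simp [dL, idW, i.isLt]
      | right i => simp [dR]
    have hw : ∀ j : Fin (n + 0),
        Sum.elim (dL ∘ idW) (dR ∘ Fin.elim0) (finSumFinEquiv.symm j) = 2 * (j : ℕ) := by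
      intro j
      induction j using Fin.addCases with
      | left j => rw [finSumFinEquiv_symm_apply_castAdd]; simp [dL, idW]
      | right j => exact (j : Fin 0).elim0
    refine kerP_congr (fun i j => ?_) (fun i j => ?_) (fun i j => ?_)
    · rw [hv, hv]; have := i.isLt; have := j.isLt; split <;> split <;> omega
    · rw [hw, hw]; have := i.isLt; have := j.isLt; omega
    · rw [hv, hw]; have := i.isLt; have := j.isLt; split <;> omega
  rwa [he] at h

/-- The merging partition `id^{⊗n} ⊗ fat` in normal form; needs the four block partition. -/
lemma mergeq_mem (h4 : (⟨0, 4, fourBlock⟩ : Σ k l : ℕ, Partition k l) ∈ C.mem) (n : ℕ) :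
    (⟨n + 2, n + 2, kerP (fun i : Fin (n + 2) => min i.val n)
        (fun j : Fin (n + 2) => min j.val n)⟩ : Σ k l : ℕ, Partition k l) ∈ C.mem := by
  have hfat : (⟨2, 2, kerP (fun _ : Fin 2 => 0) (fun _ : Fin 2 => 0)⟩ :
      Σ k l : ℕ, Partition k l) ∈ C.mem := by
    have h := C.rotLU_mem (C.rotLU_mem h4)
    have he : rotLU (rotLU fourBlock) = kerP (fun _ : Fin 2 => (0:ℕ)) (fun _ : Fin 2 => 0) := by
      apply Setoid.ext; intro x y
      unfold rotLU fourBlock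
      simp [rotLU, fourBlock, Setoid.comap_rel, Setoid.top_def, kerP_rel]
    rwa [he] at h
  have h := C.tensor_mem (idN_mem n) hfat
  rw [tensor_kerP] at h
  have hv : ∀ i : Fin (n + 2),
      Sum.elim (dL ∘ idW) (dR ∘ fun _ : Fin 2 => 0) (finSumFinEquiv.symm i)
        = if (i : ℕ) < n then 2 * (i : ℕ) else 1 := by
    intro i
    induction i using Fin.addCases with
    | left i => rw [finSumFinEquiv_symm_apply_castAdd]; simp [dL, idW, i.isLt]
    | right i => rw [finSumFinEquiv_symm_apply_natAdd]; simp [dR]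
  have he : kerP
        (fun i : Fin (n + 2) => Sum.elim (dL ∘ idW) (dR ∘ fun _ : Fin 2 => 0)
          (finSumFinEquiv.symm i : Fin n ⊕ Fin 2))
        (fun j : Fin (n + 2) => Sum.elim (dL ∘ idW) (dR ∘ fun _ : Fin 2 => 0)
          (finSumFinEquiv.symm j : Fin n ⊕ Fin 2))
      = kerP (fun i : Fin (n + 2) => min i.val n) (fun j : Fin (n + 2) => min j.val n) := by
    refine kerP_congr (fun i j => ?_) (fun i j => ?_) (fun i j => ?_) <;>
      rw [hv, hv] <;> have := i.isLt <;> have := j.isLt <;> split <;> split <;> omega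
  rwa [he] at h

end
lemma inSameBlock_kerP {k l : ℕ} (f : Fin k → ℕ) (g : Fin l → ℕ) {x y : Fin k ⊕ Fin l} :
    inSameBlock (kerP f g) x y ↔ Sum.elim f g x = Sum.elim f g y := Iff.rfl

/-- Composing a word with `id^{⊗n} ⊗ ⊔` caps the last two points. -/
lemma comp_cap_eq {n : ℕ} (W : Fin (n + 2) → ℕ) :
    comp (ofWord W) (kerP (fun i : Fin (n + 2) => min i.val n) (fun j : Fin n => j.val))
      = ofWord (fun i : Fin n =>
          sub (W ⟨n, by omega⟩) (W ⟨n + 1, by omega⟩) (W (Fin.castAdd 2 i))) := by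
  classical
  set c := W ⟨n, by omega⟩ with hc
  set d := W ⟨n + 1, by omega⟩ with hd
  have key : sub c d c = c := sub_c c d
  have keyd : sub c d d = c := sub_d c d
  set R : (Fin 0 ⊕ (Fin (n + 2) ⊕ Fin n)) → (Fin 0 ⊕ (Fin (n + 2) ⊕ Fin n)) → Prop :=
    fun x y =>
      (∃ a b, inSameBlock (ofWord W) a b ∧ Sum.map id Sum.inl a = x ∧ Sum.map id Sum.inl b = y) ∨
      (∃ a b, inSameBlock (kerP (fun i : Fin (n + 2) => min i.val n) (fun j : Fin n => j.val))
          a b ∧ Sum.inr a = x ∧ Sum.inr b = y) with hR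
  set L : (Fin 0 ⊕ (Fin (n + 2) ⊕ Fin n)) → ℕ :=
    Sum.elim Fin.elim0
      (Sum.elim (fun u => sub c d (W u)) (fun j => sub c d (W (Fin.castAdd 2 j)))) with hL
  have hge : ∀ i : Fin (n + 2), n ≤ (i : ℕ) → sub c d (W i) = c := by
    intro i hi
    have : (i : ℕ) = n ∨ (i : ℕ) = n + 1 := by have := i.isLt; omega
    rcases this with h | h
    · have : i = ⟨n, by omega⟩ := Fin.ext h
      rw [this, ← hc, key]
    · have : i = ⟨n + 1, by omega⟩ := Fin.ext h
      rw [this, ← hd, keyd]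
  -- generators preserve the labelling L
  have hgen : ∀ x y, R x y → Setoid.ker L x y := by
    rintro x y (⟨a, b, hab, rfl, rfl⟩ | ⟨a, b, hab, rfl, rfl⟩)
    · rcases a with a | a
      · exact a.elim0
      rcases b with b | b
      · exact b.elim0
      have hW : W a = W b := hab
      show L (Sum.inr (Sum.inl a)) = L (Sum.inr (Sum.inl b))
      simp [hL, hW]
    · rcases a with a | a <;> rcases b with b | b
      · have h' : min (a : ℕ) n = min (b : ℕ) n := hab
        show L (Sum.inr (Sum.inl a)) = L (Sum.inr (Sum.inl b))
        by_cases ha : (a : ℕ) < n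
        · have hb : (b : ℕ) < n := by omega
          have : a = b := Fin.ext (by omega)
          simp [hL, this]
        · have hb : ¬ (b : ℕ) < n := by omega
          simp only [hL, Sum.elim_inr, Sum.elim_inl]
          rw [hge a (by omega), hge b (by omega)]
      · have h' : min (a : ℕ) n = (b : ℕ) := hab
        show L (Sum.inr (Sum.inl a)) = L (Sum.inr (Sum.inr b))
        have hb := b.isLt
        have ha : (a : ℕ) < n := by rcases Nat.lt_or_ge (a : ℕ) n with h | h; exact h; omega
        have : a = Fin.castAdd 2 b := Fin.ext (by simp; omega)
        simp [hL, this]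
      · have h' : (a : ℕ) = min (b : ℕ) n := hab
        show L (Sum.inr (Sum.inr a)) = L (Sum.inr (Sum.inl b))
        have ha := a.isLt
        have hb : (b : ℕ) < n := by rcases Nat.lt_or_ge (b : ℕ) n with h | h; exact h; omega
        have : b = Fin.castAdd 2 a := Fin.ext (by simp; omega)
        simp [hL, this]
      · have h' : (a : ℕ) = (b : ℕ) := hab
        have : a = b := Fin.ext h'
        subst this
        exact rfl
  -- chains realising equal labels
  have pstep : ∀ u v : Fin (n + 2), W u = W v →
      Relation.EqvGen R (Sum.inr (Sum.inl u)) (Sum.inr (Sum.inl v)) := by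
    intro u v h
    exact Relation.EqvGen.rel _ _ (Or.inl ⟨Sum.inr u, Sum.inr v, h, rfl, rfl⟩)
  have qstep : ∀ a b : Fin (n + 2) ⊕ Fin n,
      Sum.elim (fun i : Fin (n + 2) => min (i : ℕ) n) (fun j : Fin n => (j : ℕ)) a
        = Sum.elim (fun i : Fin (n + 2) => min (i : ℕ) n) (fun j : Fin n => (j : ℕ)) b →
      Relation.EqvGen R (Sum.inr a) (Sum.inr b) := by
    intro a b h
    exact Relation.EqvGen.rel _ _ (Or.inr ⟨a, b, h, rfl, rfl⟩)
  have M : ∀ u v : Fin (n + 2), sub c d (W u) = sub c d (W v) →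
      Relation.EqvGen R (Sum.inr (Sum.inl u)) (Sum.inr (Sum.inl v)) := by
    intro u v h
    by_cases h1 : W u = W v
    · exact pstep u v h1
    by_cases h2 : W u = d
    · have hσu : sub c d (W u) = c := by rw [h2, keyd]
      have h3 : W v ≠ d := fun hv => h1 (by rw [h2, hv])
      have hσv : sub c d (W v) = W v := sub_other h3
      have hv : W v = c := by rw [← hσv, ← h, hσu]
      refine Relation.EqvGen.trans _ _ _ (pstep u ⟨n + 1, by omega⟩ (by rw [h2, hd]))
        (Relation.EqvGen.trans _ _ _
          (qstep (Sum.inl ⟨n + 1, by omega⟩) (Sum.inl ⟨n, by omega⟩) (by simp))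
          (pstep ⟨n, by omega⟩ v (by rw [← hc, hv])))
    · have hσu : sub c d (W u) = W u := sub_other h2
      by_cases h3 : W v = d
      · have hσv : sub c d (W v) = c := by rw [h3, keyd]
        have hu : W u = c := by rw [← hσu, h, hσv]
        refine Relation.EqvGen.trans _ _ _ (pstep u ⟨n, by omega⟩ (by rw [hu, hc]))
          (Relation.EqvGen.trans _ _ _
            (qstep (Sum.inl ⟨n, by omega⟩) (Sum.inl ⟨n + 1, by omega⟩) (by simp))
            (pstep ⟨n + 1, by omega⟩ v (by rw [← hd, h3])))
      · have hσv : sub c d (W v) = W v := sub_other h3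
        exact absurd (by rw [← hσu, h, hσv]) h1
  apply Setoid.ext
  rintro (x | x) (y | y)
  · exact x.elim0
  · exact x.elim0
  · exact y.elim0
  show Relation.EqvGen.setoid R _ _ ↔ _
  constructor
  · intro hxy
    have := Setoid.le_def.mp (Setoid.eqvGen_le hgen) hxy
    exact this
  · intro hxy
    have hWx : sub c d (W (Fin.castAdd 2 x)) = sub c d (W (Fin.castAdd 2 y)) := hxy
    have step1 : Relation.EqvGen R (Sum.inr (Sum.inr x)) (Sum.inr (Sum.inl (Fin.castAdd 2 x))) :=
      qstep (Sum.inr x) (Sum.inl (Fin.castAdd 2 x)) (by simp [Nat.min_eq_left (le_of_lt x.isLt)])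
    have step3 : Relation.EqvGen R (Sum.inr (Sum.inl (Fin.castAdd 2 y))) (Sum.inr (Sum.inr y)) :=
      qstep (Sum.inl (Fin.castAdd 2 y)) (Sum.inr y) (by simp [Nat.min_eq_left (le_of_lt y.isLt)])
    exact Relation.EqvGen.trans _ _ _ step1
      (Relation.EqvGen.trans _ _ _ (M _ _ hWx) step3)

section
variable {C : PartitionCategory}

lemma cap_core {n : ℕ} {W : Fin (n + 2) → ℕ}
    (hm : (⟨0, n + 2, ofWord W⟩ : Σ k l : ℕ, Partition k l) ∈ C.mem) :
    (⟨0, n, ofWord (fun i : Fin n =>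
        sub (W ⟨n, by omega⟩) (W ⟨n + 1, by omega⟩) (W (Fin.castAdd 2 i)))⟩ :
      Σ k l : ℕ, Partition k l) ∈ C.mem := by
  have h := C.comp_mem hm (capq_mem n)
  rwa [comp_cap_eq] at h

end
/-- Composing a word with `id^{⊗n} ⊗ fat` merges the blocks of the last two points. -/
lemma comp_merge_eq {n : ℕ} (W : Fin (n + 2) → ℕ) :
    comp (ofWord W)
        (kerP (fun i : Fin (n + 2) => min i.val n) (fun j : Fin (n + 2) => min j.val n))
      = ofWord (fun i : Fin (n + 2) => sub (W ⟨n, by omega⟩) (W ⟨n + 1, by omega⟩) (W i)) := by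
  classical
  set c := W ⟨n, by omega⟩ with hc
  set d := W ⟨n + 1, by omega⟩ with hd
  have key : sub c d c = c := sub_c c d
  have keyd : sub c d d = c := sub_d c d
  set R : (Fin 0 ⊕ (Fin (n + 2) ⊕ Fin (n + 2))) → (Fin 0 ⊕ (Fin (n + 2) ⊕ Fin (n + 2))) → Prop :=
    fun x y =>
      (∃ a b, inSameBlock (ofWord W) a b ∧ Sum.map id Sum.inl a = x ∧ Sum.map id Sum.inl b = y) ∨
      (∃ a b, inSameBlock
          (kerP (fun i : Fin (n + 2) => min i.val n) (fun j : Fin (n + 2) => min j.val n))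
          a b ∧ Sum.inr a = x ∧ Sum.inr b = y) with hR
  set L : (Fin 0 ⊕ (Fin (n + 2) ⊕ Fin (n + 2))) → ℕ :=
    Sum.elim Fin.elim0
      (Sum.elim (fun u => sub c d (W u)) (fun j => sub c d (W j))) with hL
  have hge : ∀ i : Fin (n + 2), n ≤ (i : ℕ) → sub c d (W i) = c := by
    intro i hi
    have : (i : ℕ) = n ∨ (i : ℕ) = n + 1 := by have := i.isLt; omega
    rcases this with h | h
    · have : i = ⟨n, by omega⟩ := Fin.ext h
      rw [this, ← hc, key]
    · have : i = ⟨n + 1, by omega⟩ := Fin.ext h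
      rw [this, ← hd, keyd]
  have hmin : ∀ a b : Fin (n + 2), min (a : ℕ) n = min (b : ℕ) n →
      sub c d (W a) = sub c d (W b) := by
    intro a b h'
    by_cases ha : (a : ℕ) < n
    · have : a = b := Fin.ext (by omega)
      rw [this]
    · rw [hge a (by omega), hge b (by omega)]
  have hgen : ∀ x y, R x y → Setoid.ker L x y := by
    rintro x y (⟨a, b, hab, rfl, rfl⟩ | ⟨a, b, hab, rfl, rfl⟩)
    · rcases a with a | a
      · exact a.elim0
      rcases b with b | b
      · exact b.elim0
      have hW : W a = W b := hab
      show L (Sum.inr (Sum.inl a)) = L (Sum.inr (Sum.inl b))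
      simp [hL, hW]
    · rcases a with a | a <;> rcases b with b | b <;>
        exact hmin _ _ hab
  have pstep : ∀ u v : Fin (n + 2), W u = W v →
      Relation.EqvGen R (Sum.inr (Sum.inl u)) (Sum.inr (Sum.inl v)) := by
    intro u v h
    exact Relation.EqvGen.rel _ _ (Or.inl ⟨Sum.inr u, Sum.inr v, h, rfl, rfl⟩)
  have qstep : ∀ a b : Fin (n + 2) ⊕ Fin (n + 2),
      Sum.elim (fun i : Fin (n + 2) => min (i : ℕ) n) (fun j : Fin (n + 2) => min (j : ℕ) n) a
        = Sum.elim (fun i : Fin (n + 2) => min (i : ℕ) n)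
            (fun j : Fin (n + 2) => min (j : ℕ) n) b →
      Relation.EqvGen R (Sum.inr a) (Sum.inr b) := by
    intro a b h
    exact Relation.EqvGen.rel _ _ (Or.inr ⟨a, b, h, rfl, rfl⟩)
  have M : ∀ u v : Fin (n + 2), sub c d (W u) = sub c d (W v) →
      Relation.EqvGen R (Sum.inr (Sum.inl u)) (Sum.inr (Sum.inl v)) := by
    intro u v h
    by_cases h1 : W u = W v
    · exact pstep u v h1
    by_cases h2 : W u = d
    · have hσu : sub c d (W u) = c := by rw [h2, keyd]
      have h3 : W v ≠ d := fun hv => h1 (by rw [h2, hv])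
      have hσv : sub c d (W v) = W v := sub_other h3
      have hv : W v = c := by rw [← hσv, ← h, hσu]
      refine Relation.EqvGen.trans _ _ _ (pstep u ⟨n + 1, by omega⟩ (by rw [h2, hd]))
        (Relation.EqvGen.trans _ _ _
          (qstep (Sum.inl ⟨n + 1, by omega⟩) (Sum.inl ⟨n, by omega⟩) (by simp))
          (pstep ⟨n, by omega⟩ v (by rw [← hc, hv])))
    · have hσu : sub c d (W u) = W u := sub_other h2
      by_cases h3 : W v = d
      · have hσv : sub c d (W v) = c := by rw [h3, keyd]
        have hu : W u = c := by rw [← hσu, h, hσv]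
        refine Relation.EqvGen.trans _ _ _ (pstep u ⟨n, by omega⟩ (by rw [hu, hc]))
          (Relation.EqvGen.trans _ _ _
            (qstep (Sum.inl ⟨n, by omega⟩) (Sum.inl ⟨n + 1, by omega⟩) (by simp))
            (pstep ⟨n + 1, by omega⟩ v (by rw [← hd, h3])))
      · have hσv : sub c d (W v) = W v := sub_other h3
        exact absurd (by rw [← hσu, h, hσv]) h1
  apply Setoid.ext
  rintro (x | x) (y | y)
  · exact x.elim0
  · exact x.elim0
  · exact y.elim0
  show Relation.EqvGen.setoid R _ _ ↔ _
  constructor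
  · intro hxy
    exact Setoid.le_def.mp (Setoid.eqvGen_le hgen) hxy
  · intro hxy
    have hWx : sub c d (W x) = sub c d (W y) := hxy
    have step1 : Relation.EqvGen R (Sum.inr (Sum.inr x)) (Sum.inr (Sum.inl x)) :=
      qstep (Sum.inr x) (Sum.inl x) rfl
    have step3 : Relation.EqvGen R (Sum.inr (Sum.inl y)) (Sum.inr (Sum.inr y)) :=
      qstep (Sum.inl y) (Sum.inr y) rfl
    exact Relation.EqvGen.trans _ _ _ step1
      (Relation.EqvGen.trans _ _ _ (M _ _ hWx) step3)

section
variable {C : PartitionCategory}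

lemma merge_core (h4 : (⟨0, 4, fourBlock⟩ : Σ k l : ℕ, Partition k l) ∈ C.mem)
    {n : ℕ} {W : Fin (n + 2) → ℕ}
    (hm : (⟨0, n + 2, ofWord W⟩ : Σ k l : ℕ, Partition k l) ∈ C.mem) :
    (⟨0, n + 2, ofWord (fun i : Fin (n + 2) =>
        sub (W ⟨n, by omega⟩) (W ⟨n + 1, by omega⟩) (W i))⟩ :
      Σ k l : ℕ, Partition k l) ∈ C.mem := by
  have h := C.comp_mem hm (mergeq_mem h4 n)
  rwa [comp_merge_eq] at h

end
section
variable {C : PartitionCategory}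

lemma InC_of_word_pt {n : ℕ} {W : Fin n → ℕ}
    (hm : (⟨0, n, ofWord W⟩ : Σ k l : ℕ, Partition k l) ∈ C.mem)
    (w : List ℕ) (h : n = w.length)
    (hpt : ∀ i : Fin n, W i = w.get (Fin.cast h i)) : InC C w :=
  InC_of_word hm w h (fun i j => by rw [hpt, hpt])

lemma word_of_InC_pt {w : List ℕ} (hw : InC C w) {n : ℕ} (h : w.length = n)
    (W : Fin n → ℕ) (hpt : ∀ i : Fin w.length, w.get i = W (Fin.cast h i)) :
    (⟨0, n, ofWord W⟩ : Σ k l : ℕ, Partition k l) ∈ C.mem :=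
  mem_congr0 h (fun i j => by rw [hpt, hpt]) hw

/-- Rotating a word one step to the left. -/
lemma to_ofWord {n : ℕ} {f : Fin 0 → ℕ} {g : Fin n → ℕ}
    (h : (⟨0, n, kerP f g⟩ : Σ k l : ℕ, Partition k l) ∈ C.mem) :
    (⟨0, n, ofWord g⟩ : Σ k l : ℕ, Partition k l) ∈ C.mem := by
  rw [ofWord_eq_kerP]
  have hf : f = Fin.elim0 := funext fun i => i.elim0
  exact (hf ▸ h : _)

lemma rot_one {w : List ℕ} (hw : InC C w) : InC C (w.rotate 1) := by
  cases w with
  | nil => simpa [List.rotate_nil] using hw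
  | cons x t =>
    have hw' : (⟨0, t.length + 1, kerP Fin.elim0 (x :: t).get⟩ :
        Σ k l : ℕ, Partition k l) ∈ C.mem := hw
    have h1 := C.rotLU_mem hw'
    rw [rotLU_kerP] at h1
    have h2 := C.rotUR_mem h1
    rw [rotUR_kerP] at h2
    refine InC_of_word_pt (to_ofWord h2) ((x :: t).rotate 1) (by simp) ?_
    intro i
    induction i using Fin.lastCases with
    | last =>
      rw [Fin.snoc_last]
      simp [List.get_eq_getElem, List.getElem_rotate]
    | cast i =>
      rw [Fin.snoc_castSucc]
      have hi := i.isLt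
      simp [List.get_eq_getElem, List.getElem_rotate, Nat.mod_eq_of_lt (by omega : (i:ℕ) + 1 < t.length + 1)]

lemma rot_many {w : List ℕ} (hw : InC C w) (k : ℕ) : InC C (w.rotate k) := by
  induction k with
  | zero => simpa using hw
  | succ k ih =>
    simpa [List.rotate_rotate] using rot_one ih

lemma rev_aux : ∀ (k : ℕ) (f : Fin k → ℕ) (t : List ℕ),
    ((⟨k, t.length, kerP f t.get⟩ : Σ k l : ℕ, Partition k l) ∈ C.mem) →
    InC C ((List.ofFn f).reverse ++ t) := by
  intro k
  induction k with
  | zero =>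
    intro f t h
    have hf : f = Fin.elim0 := funext fun i => i.elim0
    rw [show (List.ofFn f).reverse ++ t = t by simp]
    exact (hf ▸ h : _)
  | succ k ih =>
    intro f t h
    have h1 := C.rotUL_mem h
    rw [rotUL_kerP] at h1
    have hc : Fin.cases (f 0) t.get = (f 0 :: t).get := by
      funext i
      induction i using Fin.cases <;> simp
    rw [hc] at h1
    have h2 := ih (f ∘ Fin.succ) (f 0 :: t) h1
    rw [show (List.ofFn (f ∘ Fin.succ)).reverse ++ (f 0 :: t)
        = (List.ofFn f).reverse ++ t by
      rw [List.ofFn_succ]; simp [Function.comp_def]] at h2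
    exact h2

lemma rev {w : List ℕ} (hw : InC C w) : InC C w.reverse := by
  have h : (⟨0, w.length, kerP Fin.elim0 w.get⟩ : Σ k l : ℕ, Partition k l) ∈ C.mem := hw
  have h1 := C.involution_mem h
  rw [involution_kerP] at h1
  have h2 : (⟨w.length, 0, kerP w.get (List.get ([] : List ℕ))⟩ :
      Σ k l : ℕ, Partition k l) ∈ C.mem := by
    have he : List.get ([] : List ℕ) = Fin.elim0 := funext fun i => i.elim0
    rw [he]; exact h1
  have h3 := rev_aux w.length w.get [] h2
  simpa using h3

lemma tensor_words {u v : List ℕ} (hu : InC C u) (hv : InC C v) :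
    InC C (u.map dL ++ v.map dR) := by
  have hu' : (⟨0, u.length, kerP Fin.elim0 u.get⟩ : Σ k l : ℕ, Partition k l) ∈ C.mem := hu
  have hv' : (⟨0, v.length, kerP Fin.elim0 v.get⟩ : Σ k l : ℕ, Partition k l) ∈ C.mem := hv
  have h := C.tensor_mem hu' hv'
  rw [tensor_kerP] at h
  have h' := to_ofWord h
  refine InC_of_word_pt h' (u.map dL ++ v.map dR) (by simp) ?_
  intro i
  induction i using Fin.addCases with
  | left i =>
    rw [finSumFinEquiv_symm_apply_castAdd]
    simp only [List.get_eq_getElem, Fin.coe_cast, Fin.coe_castAdd, Sum.elim_inl,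
      Function.comp_apply]
    rw [List.getElem_append_left (by simpa using i.isLt)]
    simp [dL]
  | right i =>
    rw [finSumFinEquiv_symm_apply_natAdd]
    simp only [List.get_eq_getElem, Fin.coe_cast, Fin.coe_natAdd, Sum.elim_inr,
      Function.comp_apply]
    rw [List.getElem_append_right (by simp)]
    simp [dR]

end
lemma sub_same (c x : ℕ) : sub c c x = x := by
  rcases eq_or_ne x c with h | h <;> simp [sub, h]

/-- The collapse function of a capped palindrome. -/
def phi (y : List ℕ) : ℕ → ℕ := fun x => if x % 2 = 1 ∧ (x - 1) / 2 ∈ y then x - 1 else x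

lemma phi_dL (y : List ℕ) (c : ℕ) : phi y (dL c) = dL c := by
  have h1 : dL c % 2 = 0 := by simp only [dL]; omega
  simp [phi, h1]

lemma phi_dR (y : List ℕ) (c : ℕ) : phi y (dR c) = if c ∈ y then dL c else dR c := by
  have h1 : dR c % 2 = 1 := by simp only [dR]; omega
  have h2 : (dR c - 1) / 2 = c := by simp only [dR]; omega
  have h3 : dR c - 1 = dL c := by simp only [dR, dL]; omega
  unfold phi
  rw [h1, h2]
  by_cases h : c ∈ y <;> simp [h, h3]

lemma phi_comp (y : List ℕ) (c : ℕ) (x : ℕ) :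
    sub (dL c) (phi y (dR c)) (phi y x) = phi (c :: y) x := by
  by_cases hc : c ∈ y
  · rw [phi_dR, if_pos hc, sub_same]
    have hiff : ((x - 1) / 2 ∈ c :: y) ↔ ((x - 1) / 2 ∈ y) := by
      simp only [List.mem_cons]
      constructor
      · rintro (h | h)
        · rw [h]; exact hc
        · exact h
      · exact Or.inr
    simp [phi, hiff]
  · rw [phi_dR, if_neg hc]
    by_cases h1 : x % 2 = 1 ∧ (x - 1) / 2 ∈ y
    · have hφ : phi y x = x - 1 := if_pos h1
      have hφ' : phi (c :: y) x = x - 1 := by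
        refine if_pos ⟨h1.1, ?_⟩
        simp [List.mem_cons, h1.2]
      rw [hφ, hφ', sub_other]
      have := h1.1
      simp only [dR]; omega
    · have hφ : phi y x = x := if_neg h1
      rw [hφ]
      by_cases h2 : x = dR c
      · have hcond : x % 2 = 1 ∧ (x - 1) / 2 ∈ c :: y := by
          constructor
          · rw [h2]; simp only [dR]; omega
          · rw [h2]; simp only [dR, List.mem_cons]
            left; omega
        have hval : phi (c :: y) x = x - 1 := if_pos hcond
        rw [hval, h2, sub_d]
        simp only [dR, dL]; omega
      · have : phi (c :: y) x = x := by
          refine if_neg ?_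
          rintro ⟨hx1, hx2⟩
          rcases List.mem_cons.mp hx2 with h3 | h3
          · exact h2 (by simp [dR]; omega)
          · exact h1 ⟨hx1, h3⟩
        rw [this, sub_other h2]

section
variable {C : PartitionCategory}

lemma cap_end {u : List ℕ} {c d : ℕ} (h : InC C (u ++ [c, d])) :
    InC C (u.map (sub c d)) := by
  classical
  set W : Fin (u.length + 2) → ℕ := fun i =>
    if hi : (i : ℕ) < u.length then u.get ⟨i, hi⟩
    else if (i : ℕ) = u.length then c else d with hW
  have hm := word_of_InC_pt h (by simp) W ?hpt
  case hpt =>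
    intro i
    have hi2 : (i : ℕ) < u.length + 2 := by simpa using i.isLt
    simp only [List.get_eq_getElem, Fin.coe_cast]
    by_cases hi : (i : ℕ) < u.length
    · rw [List.getElem_append_left hi]
      simp [hW, hi]
    · rw [List.getElem_append_right (by omega)]
      rcases (by omega : (i : ℕ) - u.length = 0 ∨ (i : ℕ) - u.length = 1) with h0 | h0
      · have he : (i : ℕ) = u.length := by omega
        simp [h0, hW, hi, he]
      · have he : (i : ℕ) ≠ u.length := by omega
        simp [h0, hW, hi, he]
  have hWn : W ⟨u.length, by omega⟩ = c := by simp [hW]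
  have hWn1 : W ⟨u.length + 1, by omega⟩ = d := by simp [hW]
  have h2 := cap_core (C := C) hm
  refine InC_of_word_pt h2 (u.map (sub c d)) (by simp) ?_
  intro i
  have hi := i.isLt
  rw [hWn, hWn1]
  simp only [List.get_eq_getElem, Fin.coe_cast, List.getElem_map]
  congr 1
  simp [hW, Fin.coe_castAdd, hi]

lemma merge_end (h4 : (⟨0, 4, fourBlock⟩ : Σ k l : ℕ, Partition k l) ∈ C.mem)
    {u : List ℕ} {c d : ℕ} (h : InC C (u ++ [c, d])) :
    InC C (u.map (sub c d) ++ [c, c]) := by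
  classical
  set W : Fin (u.length + 2) → ℕ := fun i =>
    if hi : (i : ℕ) < u.length then u.get ⟨i, hi⟩
    else if (i : ℕ) = u.length then c else d with hW
  have hm := word_of_InC_pt h (by simp) W ?hpt
  case hpt =>
    intro i
    have hi2 : (i : ℕ) < u.length + 2 := by simpa using i.isLt
    simp only [List.get_eq_getElem, Fin.coe_cast]
    by_cases hi : (i : ℕ) < u.length
    · rw [List.getElem_append_left hi]
      simp [hW, hi]
    · rw [List.getElem_append_right (by omega)]
      rcases (by omega : (i : ℕ) - u.length = 0 ∨ (i : ℕ) - u.length = 1) with h0 | h0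
      · have he : (i : ℕ) = u.length := by omega
        simp [h0, hW, hi, he]
      · have he : (i : ℕ) ≠ u.length := by omega
        simp [h0, hW, hi, he]
  have hWn : W ⟨u.length, by omega⟩ = c := by simp [hW]
  have hWn1 : W ⟨u.length + 1, by omega⟩ = d := by simp [hW]
  have h2 := merge_core (C := C) h4 hm
  rw [hWn, hWn1] at h2
  refine InC_of_word_pt h2 (u.map (sub c d) ++ [c, c]) (by simp) ?_
  intro i
  have hi2 : (i : ℕ) < u.length + 2 := i.isLt
  simp only [List.get_eq_getElem, Fin.coe_cast]
  by_cases hi : (i : ℕ) < u.length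
  · rw [List.getElem_append_left (by simpa using hi)]
    simp [hW, hi]
  · rw [List.getElem_append_right (by simp; omega)]
    rcases (by omega : (i : ℕ) - u.length = 0 ∨ (i : ℕ) - u.length = 1) with h0 | h0
    · have he : (i : ℕ) = u.length := by omega
      have h0' : (i : ℕ) - (u.map (sub c d)).length = 0 := by simp [h0]
      simp [h0, h0', hW, hi, he, sub_c]
    · have he : (i : ℕ) ≠ u.length := by omega
      have h0' : (i : ℕ) - (u.map (sub c d)).length = 1 := by simp [h0]
      simp [h0, h0', hW, hi, he, sub_d]

lemma cap_mid {u t : List ℕ} {c d : ℕ} (h : InC C (u ++ [c, d] ++ t)) :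
    InC C ((u ++ t).map (sub c d)) := by
  have h1 := rot_many h (u.length + 2)
  have he : (u ++ [c, d] ++ t).rotate (u.length + 2) = (t ++ u) ++ [c, d] := by
    have hl : u.length + 2 = (u ++ [c, d]).length := by simp
    rw [hl, List.rotate_eq_drop_append_take (by simp)]
    rw [List.drop_left, List.take_left, List.append_assoc]
  rw [he] at h1
  have h2 := cap_end h1
  have h3 := rot_many h2 t.length
  have he2 : ((t ++ u).map (sub c d)).rotate t.length = (u ++ t).map (sub c d) := by
    rw [List.map_append]
    have hl : t.length = (t.map (sub c d)).length := by simp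
    rw [hl, List.rotate_eq_drop_append_take (by simp)]
    rw [List.drop_left, List.take_left, ← List.map_append]
  rwa [he2] at h3

lemma caprev : ∀ (y u t : List ℕ),
    InC C (u ++ y.map dL ++ (y.map dR).reverse ++ t) → InC C ((u ++ t).map (phi y)) := by
  intro y
  induction y with
  | nil =>
    intro u t h
    have h' : InC C (u ++ t) := by simpa using h
    have he : (u ++ t).map (phi []) = u ++ t := by
      have hpt : ∀ x ∈ u ++ t, phi [] x = id x := fun x _ => by simp [phi]
      rw [List.map_congr_left hpt, List.map_id]
    rw [he]
    exact h'
  | cons c y ih =>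
    intro u t h
    have h' : InC C ((u ++ [dL c]) ++ y.map dL ++ (y.map dR).reverse ++ ([dR c] ++ t)) := by
      rw [show (u ++ [dL c]) ++ y.map dL ++ (y.map dR).reverse ++ ([dR c] ++ t)
          = u ++ (c :: y).map dL ++ ((c :: y).map dR).reverse ++ t by simp]
      exact h
    have h2 := ih (u ++ [dL c]) ([dR c] ++ t) h'
    have h3 : InC C ((u.map (phi y)) ++ [phi y (dL c), phi y (dR c)] ++ t.map (phi y)) := by
      rw [show (u.map (phi y)) ++ [phi y (dL c), phi y (dR c)] ++ t.map (phi y)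
          = ((u ++ [dL c]) ++ ([dR c] ++ t)).map (phi y) by simp]
      exact h2
    have h4 := cap_mid h3
    rw [phi_dL] at h4
    have he : ((u.map (phi y) ++ t.map (phi y)).map (sub (dL c) (phi y (dR c))))
        = (u ++ t).map (phi (c :: y)) := by
      rw [← List.map_append, List.map_map]
      exact List.map_congr_left fun x _ => phi_comp y c x
    rwa [he] at h4

end
section
variable {C : PartitionCategory}

lemma map_sub_same (c : ℕ) (l : List ℕ) : l.map (sub c c) = l := by
  have hpt : ∀ x ∈ l, sub c c x = id x := fun x _ => sub_same c x
  rw [List.map_congr_left hpt, List.map_id]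

lemma reduce_pow (a b : ℕ) (X : List ℕ) : ∀ j : ℕ,
    InC C ([a] ++ List.replicate (2 * j + 1) b ++ [a] ++ X) → InC C ([a, b, a] ++ X) := by
  intro j
  induction j with
  | zero =>
    intro h
    have he : [a] ++ List.replicate (2 * 0 + 1) b ++ [a] ++ X = [a, b, a] ++ X := by
      simp [List.replicate]
    rwa [he] at h
  | succ j ih =>
    intro h
    have he : [a] ++ List.replicate (2 * (j + 1) + 1) b ++ [a] ++ X
        = [a] ++ [b, b] ++ (List.replicate (2 * j + 1) b ++ [a] ++ X) := by
      have : 2 * (j + 1) + 1 = 2 + (2 * j + 1) := by omega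
      rw [this, List.replicate_add]
      simp [List.replicate]
    rw [he] at h
    have h2 := cap_mid h
    rw [map_sub_same] at h2
    apply ih
    have he2 : [a] ++ (List.replicate (2 * j + 1) b ++ [a] ++ X)
        = [a] ++ List.replicate (2 * j + 1) b ++ [a] ++ X := by simp
    rwa [he2] at h2

lemma kerW_positioner {la lb : ℕ} {F G : Fin 3 → ℕ} (hne : la ≠ lb)
    (hf : ∀ i : Fin 3, F i = if (i : ℕ) < 2 then la else lb)
    (hg : ∀ j : Fin 3, G j = if 1 ≤ (j : ℕ) then la else lb) :
    kerP F G = pairPositioner := by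
  apply Setoid.ext
  unfold pairPositioner
  rintro (x | x) (y | y)
  · simp only [kerP_rel, Sum.elim_inl, pairPositioner, Setoid.ker_def, hf]
    by_cases hx : (x : ℕ) < 2 <;> by_cases hy : (y : ℕ) < 2 <;>
      simp [hx, hy, hne, hne.symm]
  · simp only [kerP_rel, Sum.elim_inl, Sum.elim_inr, pairPositioner, Setoid.ker_def, hf, hg]
    by_cases hx : (x : ℕ) < 2 <;> by_cases hy : 1 ≤ (y : ℕ) <;>
      simp [hx, hy, hne, hne.symm]
  · simp only [kerP_rel, Sum.elim_inl, Sum.elim_inr, pairPositioner, Setoid.ker_def, hf, hg]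
    by_cases hx : 1 ≤ (x : ℕ) <;> by_cases hy : (y : ℕ) < 2 <;>
      simp [hx, hy, hne, hne.symm]
  · simp only [kerP_rel, Sum.elim_inr, pairPositioner, Setoid.ker_def, hg]
    by_cases hx : 1 ≤ (x : ℕ) <;> by_cases hy : 1 ≤ (y : ℕ) <;>
      simp [hx, hy, hne, hne.symm]

/-- The word `baabaa` (in even letters) gives the pair positioner. -/
lemma baabaa (hab : a ≠ b) (h : InC C [dL b, dL a, dL a, dL b, dL a, dL a]) :
    GroupTheoretical C := by
  set V : Fin 6 → ℕ := fun i => [dL b, dL a, dL a, dL b, dL a, dL a].get i with hV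
  have hw : (⟨0, 6, ofWord V⟩ : Σ k l : ℕ, Partition k l) ∈ C.mem :=
    word_of_InC_pt h rfl V (fun i => rfl)
  have hw' : (⟨0, 6, kerP Fin.elim0 V⟩ : Σ k l : ℕ, Partition k l) ∈ C.mem := hw
  have h1 := C.rotRU_mem (k := 0) (l := 5) hw'
  rw [rotRU_kerP] at h1
  have h2 := C.rotRU_mem h1
  rw [rotRU_kerP] at h2
  have h3 := C.rotRU_mem h2
  rw [rotRU_kerP] at h3
  show (⟨3, 3, pairPositioner⟩ : Σ k l : ℕ, Partition k l) ∈ C.mem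
  have he : kerP
      (Fin.snoc (Fin.snoc (Fin.snoc Fin.elim0 (V (Fin.last 5)))
        ((V ∘ Fin.castSucc) (Fin.last 4)))
        (((V ∘ Fin.castSucc) ∘ Fin.castSucc) (Fin.last 3)))
      (((V ∘ Fin.castSucc) ∘ Fin.castSucc) ∘ Fin.castSucc) = pairPositioner :=
    kerW_positioner (show dL a ≠ dL b by simp only [dL]; omega)
      (fun i => by fin_cases i <;> rfl) (fun j => by fin_cases j <;> rfl)
  rwa [he] at h3

end
section
variable {C : PartitionCategory}

lemma ds_mem {c d : ℕ} (hcd : c ≠ d) (h : InC C [c, d]) :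
    (⟨0, 2, doubleSingleton⟩ : Σ k l : ℕ, Partition k l) ∈ C.mem := by
  have he : ofList [c, d] = doubleSingleton := by
    apply Setoid.ext
    rintro (x | x) (y | y)
    · exact x.elim0
    · exact x.elim0
    · exact y.elim0
    · unfold ofList ofWord doubleSingleton
      fin_cases x <;> fin_cases y <;>
        simp [ofList, ofWord, Setoid.ker_def, doubleSingleton, Setoid.bot_def, hcd, hcd.symm]
  have h' := h
  unfold InC at h'
  rw [he] at h'
  exact h'

end
theorem statement11 (C : PartitionCategory) (hH : Hyperoctahedral C)
    (a b : ℕ) (hab : a ≠ b) (k : ℕ) (hk : Odd k) (X : List ℕ)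
    (hp : (⟨0, _, ofList ([a] ++ List.replicate k b ++ [a] ++ X)⟩ :
        Σ k l : ℕ, Partition k l) ∈ C.mem) :
    GroupTheoretical C := by
  classical
  have h0 : InC C ([a] ++ List.replicate k b ++ [a] ++ X) := hp
  obtain ⟨j, hj⟩ := hk
  rw [hj] at h0
  have h1 : InC C ([a, b, a] ++ X) := reduce_pow a b X j h0
  have h2 := rev h1
  rw [show ([a, b, a] ++ X).reverse = X.reverse ++ [a, b, a] by simp] at h2
  have h3 := tensor_words h1 h2
  rw [show ([a, b, a] ++ X).map dL ++ (X.reverse ++ [a, b, a]).map dR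
      = [dL a, dL b, dL a] ++ X.map dL ++ (X.map dR).reverse ++ [dR a, dR b, dR a] by
    simp] at h3
  have h4 := caprev X [dL a, dL b, dL a] [dR a, dR b, dR a] h3
  rw [show ([dL a, dL b, dL a] ++ [dR a, dR b, dR a]).map (phi X)
      = [dL a, dL b, dL a, phi X (dR a), phi X (dR b), phi X (dR a)] by
    simp [phi_dL]] at h4
  set A := phi X (dR a) with hA
  set B := phi X (dR b) with hB
  have h5 := rot_many h4 4
  rw [show ([dL a, dL b, dL a, A, B, A].rotate 4) = [B, A, dL a, dL b] ++ [dL a, A]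
      from rfl] at h5
  have h6 := merge_end hH.1 h5
  have hAval : A = dL a ∨ A = dR a := by
    rw [hA, phi_dR]; split
    · exact Or.inl rfl
    · exact Or.inr rfl
  have hsubA : sub (dL a) A A = dL a := sub_d _ _
  have hsubla : sub (dL a) A (dL a) = dL a := sub_c _ _
  have hsublb : sub (dL a) A (dL b) = dL b := by
    refine sub_other ?_
    rcases hAval with h | h <;> rw [h] <;> simp only [dL, dR] <;> omega
  by_cases hb : b ∈ X
  · have hBval : B = dL b := by rw [hB, phi_dR, if_pos hb]
    have hsubB : sub (dL a) A B = dL b := by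
      rw [hBval]
      refine sub_other ?_
      rcases hAval with h | h <;> rw [h] <;> simp only [dL, dR] <;> omega
    rw [show [B, A, dL a, dL b].map (sub (dL a) A) ++ [dL a, dL a]
        = [sub (dL a) A B, sub (dL a) A A, sub (dL a) A (dL a), sub (dL a) A (dL b),
            dL a, dL a] from rfl, hsubA, hsubla, hsublb, hsubB] at h6
    exact baabaa hab h6
  · have hBval : B = dR b := by rw [hB, phi_dR, if_neg hb]
    have hsubB : sub (dL a) A B = dR b := by
      rw [hBval]
      refine sub_other ?_
      rcases hAval with h | h <;> rw [h] <;> simp only [dL, dR] <;> omega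
    rw [show [B, A, dL a, dL b].map (sub (dL a) A) ++ [dL a, dL a]
        = [sub (dL a) A B, sub (dL a) A A, sub (dL a) A (dL a), sub (dL a) A (dL b),
            dL a, dL a] from rfl, hsubA, hsubla, hsublb, hsubB] at h6
    -- h6 : InC C [dR b, dL a, dL a, dL b, dL a, dL a]
    have h7 := cap_mid (u := [dR b]) (c := dL a) (d := dL a) (t := [dL b, dL a, dL a])
      (by rw [show [dR b] ++ [dL a, dL a] ++ [dL b, dL a, dL a]
          = [dR b, dL a, dL a, dL b, dL a, dL a] from rfl]; exact h6)
    rw [map_sub_same] at h7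
    have h8 := cap_end (u := [dR b, dL b]) (c := dL a) (d := dL a)
      (by rw [show [dR b, dL b] ++ [dL a, dL a] = [dR b] ++ [dL b, dL a, dL a] from rfl]
          exact h7)
    rw [map_sub_same] at h8
    exact absurd (ds_mem (by simp only [dL, dR]; omega) h8) hH.2
end EasyQG
end

section
/- Let A be a unital C*-algebra and let u_{ij} ∈ A (1 ≤ i,j ≤ n) be self-adjoint elements satisfying u_{ik}u_{jk} = u_{ki}u_{kj} = 0 for all i ≠ j and all k, and ∑_{k=1}^n u_{ik}² = ∑_{k=1}^n u_{ki}² = 1 for all i. Then for all i,j the element u_{ij}² is a projection (i.e. u_{ij}⁴ = u_{ij}²) and u_{ij} is a partial isometry (i.e. u_{ij}³ = u_{ij}). -/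
/-- In a unital C*-algebra, self-adjoint elements `u i j` with orthogonal rows
and columns (`u i k * u j k = u k i * u k j = 0` for `i ≠ j`) whose squares sum
to `1` along every row and column are partial isometries, and their squares are
projections. -/
theorem statement18 {A : Type*} [NormedRing A] [StarRing A] [CStarRing A]
    [NormedAlgebra ℂ A] [CompleteSpace A] [StarModule ℂ A]
    (n : ℕ) (u : Fin n → Fin n → A)
    (hsa : ∀ i j, star (u i j) = u i j)
    (horthRow : ∀ i j k, i ≠ j → u i k * u j k = 0)
    (horthCol : ∀ i j k, i ≠ j → u k i * u k j = 0)
    (hrow : ∀ i, ∑ k, u i k ^ 2 = 1)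
    (hcol : ∀ i, ∑ k, u k i ^ 2 = 1) :
    ∀ i j, (u i j ^ 2) ^ 2 = u i j ^ 2 ∧ star (u i j ^ 2) = u i j ^ 2 ∧
      u i j ^ 3 = u i j := by
  intro i j
  have h3 : u i j ^ 3 = u i j := by
    have h : u i j * (∑ k, u k j ^ 2) = u i j := by rw [hcol j, mul_one]
    rw [Finset.mul_sum, Finset.sum_eq_single i] at h
    · calc u i j ^ 3 = u i j * u i j ^ 2 := by
            rw [pow_two] at h; rw [pow_succ, pow_two, mul_assoc]
        _ = u i j := h
    · intro k _ hk
      rw [pow_two, ← mul_assoc, horthRow i k j hk.symm, zero_mul]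
    · intro hi; exact absurd (Finset.mem_univ i) hi
  refine ⟨?_, ?_, h3⟩
  · calc (u i j ^ 2) ^ 2 = u i j ^ 3 * u i j := by rw [← pow_mul, pow_succ]
      _ = u i j ^ 2 := by rw [h3, ← pow_two]
  · rw [star_pow, hsa]
end
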